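/- arXiv:1804.08945 — 3 statements merged into one kernel-verified Lean document; each statement's English description precedes it below -/
import Mathlib

section
/- Let k_0 : [0,1] → ℝ be nonnegative and integrable, continuous near 1, and suppose there exist r > 1, C_r > 0 and ε > 0 such that |k_0(x) - k_0(1)| ≤ C_r |log x|^r for all x ∈ (1-ε, 1). Then ∫_0^1 k_0(x) x^{s-1} dx = k_0(1)/s + o(s^{-r}) as s → ∞ along the reals. -/
/-!
Since `k₀(1)/s = ∫₀¹ k₀(1) x^(s-1) dx`, it suffices to show `∫₀¹ g(x) x^(s-1) dx = o(s^(-r))`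
for `g = k₀ - k₀(1)`. Away from `1`, on `(0, a]`, this integral is `O(a^s)`, exponentially small.
Near `1`, the bound `|g(x)| ≤ C |log x|^r` together with `|log x|^r x^(s/2) ≤ (2r/s)^r` leaves
`C (2r/s)^r ∫₀¹ x^(s/2-1) dx = O(s^(-r-1))`.
-/

open MeasureTheory Set Filter Asymptotics Real Topology

namespace Real

theorem rpow_le_rpow_self_mul_exp {r b : ℝ} (hr : 0 < r) (hb : 0 ≤ b) :
    b ^ r ≤ r ^ r * exp b := by
  have hlin : b / r ≤ exp (b / r) := by linarith [add_one_le_exp (b / r)]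
  calc b ^ r = r ^ r * (b / r) ^ r := by
        rw [← mul_rpow hr.le (by positivity), mul_div_cancel₀ _ hr.ne']
    _ ≤ r ^ r * exp (b / r) ^ r := by gcongr
    _ = r ^ r * exp b := by rw [← exp_mul, div_mul_cancel₀ _ hr.ne']

theorem abs_log_rpow_mul_rpow_le {r u x : ℝ} (hr : 0 < r) (hu : 0 < u) (hx0 : 0 < x)
    (hx1 : x ≤ 1) : |log x| ^ r * x ^ u ≤ (r / u) ^ r := by
  set t := -log x
  have ht : 0 ≤ t := neg_nonneg.2 (log_nonpos hx0.le hx1)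
  have habs : |log x| = t := abs_of_nonpos (neg_nonneg.1 ht)
  have hxu : x ^ u = exp (-(u * t)) := by
    rw [rpow_def_of_pos hx0, show t = -log x from rfl]; ring_nf
  rw [habs, hxu]
  calc t ^ r * exp (-(u * t)) = (u * t) ^ r / u ^ r / exp (u * t) := by
        rw [mul_rpow hu.le ht, exp_neg]; field_simp
    _ ≤ r ^ r * exp (u * t) / u ^ r / exp (u * t) := by
        gcongr; exact rpow_le_rpow_self_mul_exp hr (by positivity)
    _ = (r / u) ^ r := by rw [div_rpow hr.le hu.le]; field_simp

end Real

theorem integrableOn_rpow_sub_one_Ioo_zero_one {u : ℝ} (hu : 0 < u) :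
    IntegrableOn (fun x : ℝ => x ^ (u - 1)) (Ioo 0 1) :=
  ((intervalIntegrable_iff_integrableOn_Ioc_of_le zero_le_one).1
    (intervalIntegral.intervalIntegrable_rpow' (by linarith))).mono_set Ioo_subset_Ioc_self

theorem integral_rpow_sub_one_Ioo_zero_one {u : ℝ} (hu : 0 < u) :
    ∫ x in Ioo (0 : ℝ) 1, x ^ (u - 1) = 1 / u := by
  rw [← integral_Ioc_eq_integral_Ioo, ← intervalIntegral.integral_of_le zero_le_one,
    integral_rpow (Or.inl (by linarith)), sub_add_cancel, one_rpow, zero_rpow hu.ne']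
  ring

theorem MeasureTheory.IntegrableOn.mul_rpow_sub_one {f : ℝ → ℝ} {s : ℝ}
    (hf : IntegrableOn f (Ioo 0 1)) (hs : 1 ≤ s) :
    IntegrableOn (fun x => f x * x ^ (s - 1)) (Ioo 0 1) := by
  refine Integrable.mul_bdd hf (by fun_prop) (c := 1) ?_
  filter_upwards [self_mem_ae_restrict measurableSet_Ioo] with x hx
  rw [norm_of_nonneg (rpow_nonneg hx.1.le _)]
  exact rpow_le_one hx.1.le hx.2.le (by linarith)

theorem setIntegral_mul_rpow_sub_one_sub_div {f : ℝ → ℝ} {s : ℝ}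
    (hf : IntegrableOn f (Ioo 0 1)) (hs : 1 ≤ s) (c : ℝ) :
    (∫ x in Ioo (0 : ℝ) 1, f x * x ^ (s - 1)) - c / s
      = ∫ x in Ioo (0 : ℝ) 1, (f x - c) * x ^ (s - 1) := by
  simp_rw [sub_mul]
  rw [integral_sub (hf.mul_rpow_sub_one hs)
    ((integrableOn_rpow_sub_one_Ioo_zero_one (by linarith)).const_mul c),
    integral_const_mul, integral_rpow_sub_one_Ioo_zero_one (by linarith), mul_one_div]

theorem norm_setIntegral_Ioc_mul_rpow_le {g : ℝ → ℝ} {a s : ℝ} (hg : IntegrableOn g (Ioc 0 a))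
    (hs : 1 ≤ s) :
    ‖∫ x in Ioc 0 a, g x * x ^ (s - 1)‖ ≤ (∫ x in Ioc 0 a, |g x|) * a ^ (s - 1) := by
  rw [← integral_mul_const]
  refine norm_integral_le_of_norm_le (hg.abs.mul_const _) ?_
  filter_upwards [self_mem_ae_restrict measurableSet_Ioc] with x hx
  rw [norm_mul, norm_of_nonneg (rpow_nonneg hx.1.le _), Real.norm_eq_abs]
  exact mul_le_mul_of_nonneg_left (rpow_le_rpow hx.1.le hx.2 (by linarith)) (abs_nonneg _)

theorem norm_setIntegral_Ioo_mul_rpow_le {g : ℝ → ℝ} {a C r s : ℝ} (ha : 0 ≤ a) (hr : 0 < r)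
    (hC : 0 ≤ C) (hg : ∀ x ∈ Ioo a 1, |g x| ≤ C * |log x| ^ r) (hs : 0 < s) :
    ‖∫ x in Ioo a 1, g x * x ^ (s - 1)‖ ≤ C * (2 * r / s) ^ r * (2 / s) := by
  have hs2 : 0 < s / 2 := by linarith
  have hsub : Ioo a 1 ⊆ Ioo 0 1 := Ioo_subset_Ioo_left ha
  have hint := integrableOn_rpow_sub_one_Ioo_zero_one hs2
  calc ‖∫ x in Ioo a 1, g x * x ^ (s - 1)‖
      ≤ ∫ x in Ioo a 1, C * (2 * r / s) ^ r * x ^ (s / 2 - 1) := by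
        refine norm_integral_le_of_norm_le ((hint.mono_set hsub).const_mul _) ?_
        filter_upwards [self_mem_ae_restrict measurableSet_Ioo] with x hx
        have hx0 : 0 < x := ha.trans_lt hx.1
        have hsplit : x ^ (s - 1) = x ^ (s / 2) * x ^ (s / 2 - 1) := by
          rw [← rpow_add hx0]; ring_nf
        have hlog : |log x| ^ r * x ^ (s / 2) ≤ (2 * r / s) ^ r := by
          simpa only [div_div_eq_mul_div, mul_comm] using
            abs_log_rpow_mul_rpow_le hr hs2 hx0 hx.2.le
        rw [norm_mul, norm_of_nonneg (rpow_nonneg hx0.le _), Real.norm_eq_abs, hsplit]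
        calc |g x| * (x ^ (s / 2) * x ^ (s / 2 - 1))
            ≤ C * (|log x| ^ r * x ^ (s / 2)) * x ^ (s / 2 - 1) := by
              rw [← mul_assoc, ← mul_assoc]; gcongr; exact hg x hx
          _ ≤ C * (2 * r / s) ^ r * x ^ (s / 2 - 1) := by gcongr
    _ ≤ C * (2 * r / s) ^ r * ∫ x in Ioo (0 : ℝ) 1, x ^ (s / 2 - 1) := by
        rw [integral_const_mul]
        refine mul_le_mul_of_nonneg_left (setIntegral_mono_set hint ?_ hsub.eventuallyLE)
          (by positivity)
        exact ae_restrict_of_forall_mem measurableSet_Ioo fun x hx => rpow_nonneg hx.1.le _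
    _ = C * (2 * r / s) ^ r * (2 / s) := by
        rw [integral_rpow_sub_one_Ioo_zero_one hs2]; ring

theorem rpow_sub_one_isLittleO_rpow {a : ℝ} (ha0 : 0 < a) (ha1 : a < 1) (b : ℝ) :
    (fun s : ℝ => a ^ (s - 1)) =o[atTop] fun s => s ^ b := by
  have hlog : 0 < -log a := neg_pos.2 (log_neg ha0 ha1)
  have heq : (fun s : ℝ => a ^ (s - 1)) = fun s => a⁻¹ * exp (-(-log a) * s) := by
    ext s
    rw [rpow_def_of_pos ha0, show log a * (s - 1) = -log a + -(-log a) * s by ring, exp_add,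
      exp_neg, exp_log ha0]
  rw [heq]
  exact (isLittleO_exp_neg_mul_rpow_atTop hlog b).const_mul_left _

theorem div_rpow_mul_div_isLittleO_rpow_neg {c : ℝ} (hc : 0 ≤ c) (d r : ℝ) :
    (fun s : ℝ => (c / s) ^ r * (d / s)) =o[atTop] fun s => s ^ (-r) := by
  have hinv : (fun s : ℝ => s ^ (-r) * s⁻¹) =o[atTop] fun s => s ^ (-r) * 1 :=
    (isBigO_refl _ _).mul_isLittleO ((isLittleO_one_iff ℝ).2 tendsto_inv_atTop_zero)
  refine (hinv.const_mul_left (c ^ r * d)).congr' ?_ (by simp only [mul_one]; rfl)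
  filter_upwards [eventually_gt_atTop 0] with s hs
  rw [div_rpow hc hs.le, rpow_neg hs.le]
  ring

theorem isLittleO_setIntegral_mul_rpow_sub_one {g : ℝ → ℝ} {C r : ℝ}
    (hint : IntegrableOn g (Ioo 0 1)) (hr : 0 < r) (hC : 0 ≤ C)
    (hg : ∀ᶠ x in 𝓝[<] 1, |g x| ≤ C * |log x| ^ r) :
    (fun s : ℝ => ∫ x in Ioo (0 : ℝ) 1, g x * x ^ (s - 1)) =o[atTop] fun s => s ^ (-r) := by
  obtain ⟨l, hl1, hl⟩ := mem_nhdsLT_iff_exists_Ioo_subset.1 hg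
  set a := max l 2⁻¹
  have ha0 : 0 < a := lt_max_of_lt_right (by norm_num)
  have ha1 : a < 1 := max_lt hl1 (by norm_num)
  have hga : ∀ x ∈ Ioo a 1, |g x| ≤ C * |log x| ^ r :=
    fun x hx => hl ⟨(le_max_left _ _).trans_lt hx.1, hx.2⟩
  have hbound : ∀ᶠ s in atTop, ‖∫ x in Ioo (0 : ℝ) 1, g x * x ^ (s - 1)‖
      ≤ (∫ x in Ioc 0 a, |g x|) * a ^ (s - 1) + C * (2 * r / s) ^ r * (2 / s) := by
    filter_upwards [eventually_ge_atTop 1] with s hs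
    have hgs := hint.mul_rpow_sub_one hs
    rw [← Ioc_union_Ioo_eq_Ioo ha0.le ha1,
      setIntegral_union (disjoint_left.2 fun _ hx hx' => hx'.1.not_ge hx.2) measurableSet_Ioo
      (hgs.mono_set (Ioc_subset_Ioo_right ha1))
      (hgs.mono_set (Ioo_subset_Ioo_left ha0.le))]
    refine (norm_add_le _ _).trans (add_le_add ?_ ?_)
    · exact norm_setIntegral_Ioc_mul_rpow_le (hint.mono_set (Ioc_subset_Ioo_right ha1)) hs
    · exact norm_setIntegral_Ioo_mul_rpow_le ha0.le hr hC hga (by linarith)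
  refine (IsBigO.of_bound' (hbound.mono fun _ h => h.trans (le_norm_self _))).trans_isLittleO
    (((rpow_sub_one_isLittleO_rpow ha0 ha1 _).const_mul_left _).add ?_)
  simpa only [mul_assoc] using
    (div_rpow_mul_div_isLittleO_rpow_neg (by positivity : 0 ≤ 2 * r) 2 r).const_mul_left C

theorem mellin_expansion_rate_general
    (k₀ : ℝ → ℝ) (ε r C_r : ℝ) (hε : 0 < ε) (hr : 1 < r) (hC : 0 < C_r)
    (hint : IntegrableOn k₀ (Set.Ioo 0 1))
    (hholder : ∀ x ∈ Set.Ioo (1 - ε) 1, |k₀ x - k₀ 1| ≤ C_r * |Real.log x| ^ r) :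
    (fun s : ℝ => (∫ x in Set.Ioo (0:ℝ) 1, k₀ x * x ^ (s - 1)) - k₀ 1 / s)
      =o[atTop] fun s : ℝ => s ^ (-r) := by
  have hnear : ∀ᶠ x in 𝓝[<] 1, |k₀ x - k₀ 1| ≤ C_r * |Real.log x| ^ r :=
    mem_of_superset (Ioo_mem_nhdsLT (by linarith)) hholder
  have hdiff := isLittleO_setIntegral_mul_rpow_sub_one
    (hint.sub (integrableOn_const (by simp))) (by linarith) hC.le hnear
  refine hdiff.congr' ?_ EventuallyEq.rfl
  filter_upwards [eventually_ge_atTop 1] with s hs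
  exact (setIntegral_mul_rpow_sub_one_sub_div hint hs _).symm

/-- If `k₀` is nonnegative, integrable on `(0,1)`, continuous on `[1-ε,1]`, and
satisfies `|k₀(x) - k₀(1)| ≤ C_r |log x|^r` on `(1-ε,1)` with `r > 1`, then
`∫_0^1 k₀(x) x^{s-1} dx = k₀(1)/s + o(s^{-r})` as `s → ∞` along the reals. -/
theorem mellin_expansion_rate
    (k₀ : ℝ → ℝ) (ε r C_r : ℝ) (hε : 0 < ε) (hr : 1 < r) (hC : 0 < C_r)
    (hint : IntegrableOn k₀ (Set.Ioo 0 1))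
    (hnonneg : ∀ x ∈ Set.Ioo (0:ℝ) 1, 0 ≤ k₀ x)
    (hcont : ContinuousOn k₀ (Set.Icc (1 - ε) 1))
    (hholder : ∀ x ∈ Set.Ioo (1 - ε) 1, |k₀ x - k₀ 1| ≤ C_r * |Real.log x| ^ r) :
    (fun s : ℝ => (∫ x in Set.Ioo (0:ℝ) 1, k₀ x * x ^ (s - 1)) - k₀ 1 / s)
      =o[atTop] fun s : ℝ => s ^ (-r) :=
  mellin_expansion_rate_general k₀ ε r C_r hε hr hC hint hholder
end

section
/- (Sokhotski–Plemelj on the half line) Let f be a test function (smooth, compactly supported in (0,∞)) and a > 0. Then lim_{ε→0⁺} ∫_0^∞ f(w)/(w - a e^{±iε}) dw = P.V. ∫_0^∞ f(w)/(w-a) dw ± iπ f(a), where P.V. denotes the Cauchy principal value. -/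
open MeasureTheory Set Filter Complex

private lemma sp_abs_le {a w θ : ℝ} (ha : 0 < a) (hw : 0 ≤ w) :
    |w - a| ≤ ‖(w : ℂ) - a * Complex.exp (θ * Complex.I)‖ := by
  have h1 : (w - a)^2 ≤ Complex.normSq ((w : ℂ) - a * Complex.exp (θ * Complex.I)) := by
    simp only [Complex.normSq_apply, Complex.sub_re, Complex.sub_im, Complex.ofReal_re,
      Complex.ofReal_im, Complex.re_ofReal_mul, Complex.im_ofReal_mul,
      Complex.exp_ofReal_mul_I_re, Complex.exp_ofReal_mul_I_im]
    have e : (w - a * Real.cos θ) * (w - a * Real.cos θ)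
          + (0 - a * Real.sin θ) * (0 - a * Real.sin θ) - (w - a)^2
        = 2 * (a * w * (1 - Real.cos θ))
          + a^2 * (Real.sin θ^2 + Real.cos θ^2 - 1) := by ring
    have h1 := Real.sin_sq_add_cos_sq θ
    have h2 := mul_nonneg (mul_nonneg ha.le hw) (sub_nonneg.2 (Real.cos_le_one θ))
    nlinarith [e, h1, h2]
  calc |w - a| = Real.sqrt ((w - a)^2) := (Real.sqrt_sq_eq_abs _).symm
    _ ≤ _ := by rw [Complex.norm_def]; exact Real.sqrt_le_sqrt h1

private lemma sp_ftc_clog {z : ℂ} (hz : z.im ≠ 0) {R : ℝ} (hR : 0 ≤ R) :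
    ∫ w in (0:ℝ)..R, ((w : ℂ) - z)⁻¹ =
      Complex.log ((R : ℂ) - z) - Complex.log (-z) := by
  have hne : ∀ w : ℝ, (w : ℂ) - z ∈ Complex.slitPlane := by
    intro w
    exact Or.inr (by simp [hz])
  have hder : ∀ w ∈ Set.uIcc (0:ℝ) R,
      HasDerivAt (fun w : ℝ => Complex.log ((w : ℂ) - z)) (((w : ℂ) - z)⁻¹) w := by
    intro w _
    have h0 : HasDerivAt (fun w : ℝ => (w : ℂ) - z) 1 w := by
      simpa using (Complex.ofRealCLM.hasDerivAt (x := w)).sub_const z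
    simpa [one_div] using h0.clog_real (hne w)
  have hint : IntervalIntegrable (fun w : ℝ => ((w : ℂ) - z)⁻¹) volume 0 R := by
    apply Continuous.intervalIntegrable
    exact (Complex.continuous_ofReal.sub continuous_const).inv₀
      (fun w => Complex.slitPlane_ne_zero (hne w))
  have := intervalIntegral.integral_eq_sub_of_hasDerivAt hder hint
  simpa using this

private lemma sp_ftc_rlog {a c b : ℝ} (h : a ∉ Set.uIcc c b) :
    ∫ w in c..b, ((w : ℂ) - a)⁻¹ = ((Real.log (b - a) - Real.log (c - a) : ℝ) : ℂ) := by
  have hne : ∀ w ∈ Set.uIcc c b, w - a ≠ 0 := by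
    intro w hw
    exact sub_ne_zero.2 (fun hwa => h (hwa ▸ hw))
  have h1 : ∀ w : ℝ, ((w : ℂ) - a)⁻¹ = (((w - a)⁻¹ : ℝ) : ℂ) := by
    intro w; push_cast; ring
  simp only [h1]
  rw [intervalIntegral.integral_ofReal]
  norm_cast
  have hder : ∀ w ∈ Set.uIcc c b,
      HasDerivAt (fun w : ℝ => Real.log (w - a)) ((w - a)⁻¹) w := by
    intro w hw
    exact ((Real.hasDerivAt_log (hne w hw)).comp w ((hasDerivAt_id w).sub_const a)).congr_deriv (mul_one _)
  have hint : IntervalIntegrable (fun w : ℝ => (w - a)⁻¹) volume c b := by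
    apply ContinuousOn.intervalIntegrable
    exact (ContinuousOn.inv₀ (by fun_prop) hne)
  simpa using intervalIntegral.integral_eq_sub_of_hasDerivAt hder hint

/-- Sokhotski–Plemelj formula on the half line: for a smooth compactly
supported test function `f` on `(0,∞)` and `a > 0`, if the principal value
`P.V. ∫_0^∞ f(w)/(w-a) dw` equals `pv`, then
`∫_0^∞ f(w)/(w - a e^{±iε}) dw → pv ± iπ f(a)` as `ε → 0⁺`. -/
theorem sokhotski_plemelj
    (f : ℝ → ℝ) (hf : ContDiff ℝ (⊤ : ℕ∞) f) (hsupp : HasCompactSupport f)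
    (hsupp' : Function.support f ⊆ Set.Ioi 0)
    (a : ℝ) (ha : 0 < a) (pv : ℂ)
    (hpv : Tendsto
      (fun δ : ℝ => ∫ w in Set.Ioi (0:ℝ) \ Set.Ioo (a - δ) (a + δ),
        (f w : ℂ) / ((w : ℂ) - (a : ℂ)))
      (nhdsWithin 0 (Set.Ioi 0)) (nhds pv)) :
    Tendsto
      (fun ε : ℝ => ∫ w in Set.Ioi (0:ℝ),
        (f w : ℂ) / ((w : ℂ) - (a : ℂ) * Complex.exp (Complex.I * ε)))
      (nhdsWithin 0 (Set.Ioi 0)) (nhds (pv + Real.pi * Complex.I * (f a : ℂ))) ∧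
    Tendsto
      (fun ε : ℝ => ∫ w in Set.Ioi (0:ℝ),
        (f w : ℂ) / ((w : ℂ) - (a : ℂ) * Complex.exp (-(Complex.I * ε))))
      (nhdsWithin 0 (Set.Ioi 0)) (nhds (pv - Real.pi * Complex.I * (f a : ℂ))) := by
  obtain ⟨r, hr⟩ := hsupp.isBounded.subset_closedBall 0
  set R : ℝ := max r a + 1 with hRdef
  have haR : a < R := lt_of_le_of_lt (le_max_right r a) (lt_add_one _)
  have hR0 : (0:ℝ) < R := lt_trans ha haR
  have hfR : ∀ w : ℝ, R ≤ w → f w = 0 := by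
    intro w hw
    by_contra h
    have hw' := hr (subset_tsupport f (Function.mem_support.2 h))
    rw [Metric.mem_closedBall, Real.dist_eq, sub_zero] at hw'
    have h1 : w ≤ r := (abs_le.1 hw').2
    have h2 : r < R := lt_of_le_of_lt (le_max_left r a) (lt_add_one _)
    linarith
  have hf0 : ∀ w : ℝ, w ≤ 0 → f w = 0 := by
    intro w hw
    by_contra h
    exact absurd (hsupp' (Function.mem_support.2 h)) (by simpa using hw)
  obtain ⟨C, hC⟩ := ContDiff.lipschitzWith_of_hasCompactSupport hsupp hf (by simp)
  set G : ℂ → ℝ → ℂ := fun z w => ((f w : ℂ) - (f a : ℂ)) / ((w : ℂ) - z) with hGdef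
  have hCb : ∀ (w : ℝ) (z : ℂ), |w - a| ≤ ‖(w:ℂ) - z‖ → ‖G z w‖ ≤ C := by
    intro w z hle
    have h1 : ‖(f w : ℂ) - (f a : ℂ)‖ ≤ C * ‖(w:ℂ) - z‖ := by
      have hd := hC.dist_le_mul w a
      rw [Real.dist_eq, Real.dist_eq] at hd
      calc ‖(f w : ℂ) - (f a : ℂ)‖ = |f w - f a| := by
            rw [← Complex.ofReal_sub, Complex.norm_real, Real.norm_eq_abs]
        _ ≤ C * |w - a| := hd
        _ ≤ C * ‖(w:ℂ) - z‖ := by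
            exact mul_le_mul_of_nonneg_left hle C.coe_nonneg
    rcases (norm_nonneg ((w:ℂ) - z)).eq_or_lt with h0 | h0
    · have hz0 : (w:ℂ) - z = 0 := by
        rwa [eq_comm, norm_eq_zero] at h0
      simp [hGdef, hz0]
    · simp only [hGdef, norm_div]
      rw [div_le_iff₀ h0]
      exact h1
  have hGa_norm : ∀ w : ℝ, ‖G ↑a w‖ ≤ C := by
    intro w
    apply hCb
    rw [← Complex.ofReal_sub, Complex.norm_real, Real.norm_eq_abs]
  have hGz_norm : ∀ (θ w : ℝ), 0 ≤ w → ‖G (↑a * Complex.exp (↑θ * Complex.I)) w‖ ≤ C :=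
    fun θ w hw => hCb w _ (sp_abs_le ha hw)
  have hGmeas : ∀ z : ℂ, Measurable (G z) := by
    intro z
    exact ((Complex.measurable_ofReal.comp hf.continuous.measurable).sub
      measurable_const).div (Complex.measurable_ofReal.sub measurable_const)
  have hGa_int : IntegrableOn (G ↑a) (Ioc 0 R) := by
    apply Integrable.mono' (g := fun _ => (C:ℝ))
      (integrableOn_const measure_Ioc_lt_top.ne)
      ((hGmeas _).aestronglyMeasurable)
    exact ae_of_all _ (fun w => hGa_norm w)
  have hGa_ii : IntervalIntegrable (G ↑a) volume 0 R := by
    rw [intervalIntegrable_iff_integrableOn_Ioc_of_le hR0.le]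
    exact hGa_int
  set L : ℂ := ∫ w in (0:ℝ)..R, G ↑a w with hLdef
  set c₁ : ℂ := (f a : ℂ) * (↑(Real.log (R - a)) - ↑(Real.log a)) with hc1def
  have hsplit : ∀ (z : ℂ) (w : ℝ),
      (f w : ℂ) / ((w:ℂ) - z) = G z w + (f a : ℂ) * ((w:ℂ) - z)⁻¹ := by
    intro z w
    rw [hGdef, ← div_eq_mul_inv, ← add_div, sub_add_cancel]
  have hIoi : ∀ z : ℂ, (∫ w in Ioi (0:ℝ), (f w : ℂ) / ((w:ℂ) - z))
      = ∫ w in Ioc (0:ℝ) R, (f w : ℂ) / ((w:ℂ) - z) := by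
    intro z
    apply setIntegral_eq_of_subset_of_forall_diff_eq_zero measurableSet_Ioi
      Ioc_subset_Ioi_self
    intro w hw
    have : f w = 0 := by
      rcases hw with ⟨hw1, hw2⟩
      apply hfR
      by_contra hlt
      exact hw2 ⟨hw1, by linarith [not_le.1 hlt]⟩
    simp [this]
  have hden : ∀ w : ℝ, w ≠ a → ((w:ℂ) - ↑a) ≠ 0 :=
    fun w h => sub_ne_zero.2 (by exact_mod_cast h)
  have hGa_sub : ∀ c b : ℝ, c ∈ Icc 0 R → b ∈ Icc 0 R →
      IntervalIntegrable (G ↑a) volume c b := by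
    intro c b hc hb
    apply hGa_ii.mono_set
    exact Set.uIcc_subset_uIcc (by rwa [Set.uIcc_of_le hR0.le])
      (by rwa [Set.uIcc_of_le hR0.le])
  have hpvL : pv = L + c₁ := by
    set m : ℝ := min a (R - a) with hm
    have hm0 : 0 < m := lt_min ha (by linarith)
    have hIntOn : ∀ c b : ℝ, a ∉ Icc c b →
        IntegrableOn (fun w => (f w : ℂ) / ((w:ℂ) - ↑a)) (Icc c b) := by
      intro c b hab
      apply ContinuousOn.integrableOn_Icc
      apply ContinuousOn.div
        ((Complex.continuous_ofReal.comp hf.continuous).continuousOn) (by fun_prop)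
      intro w hw
      exact hden w (fun h => hab (h ▸ hw))
    have iInv : ∀ c b : ℝ, a ∉ Set.uIcc c b →
        IntervalIntegrable (fun w => (f a : ℂ) * ((w:ℂ) - ↑a)⁻¹) volume c b := by
      intro c b h
      apply ContinuousOn.intervalIntegrable
      apply ContinuousOn.mul continuousOn_const
      apply ContinuousOn.inv₀ (by fun_prop)
      intro w hw
      exact hden w (fun he => h (he ▸ hw))
    have hev : ∀ᶠ δ in nhdsWithin (0:ℝ) (Ioi 0),
        (∫ w in Ioi (0:ℝ) \ Ioo (a - δ) (a + δ), (f w : ℂ) / ((w:ℂ) - ↑a))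
          = ((∫ w in (0:ℝ)..(a-δ), G ↑a w) + ∫ w in (a+δ)..R, G ↑a w) + c₁ := by
      filter_upwards [Ioo_mem_nhdsGT_of_mem ⟨le_refl (0:ℝ), hm0⟩] with δ hδ
      obtain ⟨hδ0, hδm⟩ := hδ
      have hδa : δ < a := lt_of_lt_of_le hδm (min_le_left _ _)
      have hδR : a + δ < R := by
        have := lt_of_lt_of_le hδm (min_le_right _ _); linarith
      have e1 : (∫ w in Ioi (0:ℝ) \ Ioo (a - δ) (a + δ), (f w : ℂ) / ((w:ℂ) - ↑a))
          = ∫ w in Ioc (0:ℝ) R \ Ioo (a - δ) (a + δ), (f w : ℂ) / ((w:ℂ) - ↑a) := by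
        apply setIntegral_eq_of_subset_of_forall_diff_eq_zero
          (measurableSet_Ioi.diff measurableSet_Ioo)
          (diff_subset_diff_left Ioc_subset_Ioi_self)
        intro w hw
        obtain ⟨⟨hw1, hw2⟩, hw3⟩ := hw
        have hfw : f w = 0 := by
          apply hfR
          by_contra hlt
          exact hw3 ⟨⟨hw1, by linarith [not_le.1 hlt]⟩, hw2⟩
        simp [hfw]
      have hset : Ioc (0:ℝ) R \ Ioo (a - δ) (a + δ) = Ioc 0 (a-δ) ∪ Icc (a+δ) R := by
        ext w
        simp only [mem_diff, mem_Ioc, mem_Ioo, mem_union, mem_Icc, not_and, not_lt]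
        constructor
        · rintro ⟨⟨h1, h2⟩, h3⟩
          rcases le_or_gt w (a - δ) with h | h
          · exact Or.inl ⟨h1, h⟩
          · exact Or.inr ⟨h3 h, h2⟩
        · rintro (⟨h1, h2⟩ | ⟨h1, h2⟩)
          · exact ⟨⟨h1, by linarith⟩, fun h => by linarith⟩
          · exact ⟨⟨by linarith, h2⟩, fun h => h1⟩
      have hdisj : Disjoint (Ioc (0:ℝ) (a-δ)) (Icc (a+δ) R) := by
        rw [Set.disjoint_left]
        rintro x ⟨_, h1⟩ ⟨h2, _⟩
        linarith
      have piece1 : IntegrableOn (fun w => (f w : ℂ) / ((w:ℂ) - ↑a)) (Ioc 0 (a-δ)) :=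
        (hIntOn 0 (a-δ) (by rintro ⟨_, h⟩; linarith)).mono_set Ioc_subset_Icc_self
      have piece2 : IntegrableOn (fun w => (f w : ℂ) / ((w:ℂ) - ↑a)) (Icc (a+δ) R) :=
        hIntOn (a+δ) R (by rintro ⟨h, _⟩; linarith)
      rw [e1, hset, setIntegral_union hdisj measurableSet_Icc piece1 piece2,
        integral_Icc_eq_integral_Ioc,
        ← intervalIntegral.integral_of_le (by linarith : (0:ℝ) ≤ a - δ),
        ← intervalIntegral.integral_of_le (by linarith : a + δ ≤ R)]
      have hni1 : a ∉ Set.uIcc (0:ℝ) (a-δ) := by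
        rw [Set.uIcc_of_le (by linarith)]
        rintro ⟨_, h⟩; linarith
      have hni2 : a ∉ Set.uIcc (a+δ) R := by
        rw [Set.uIcc_of_le (by linarith)]
        rintro ⟨h, _⟩; linarith
      have s1 : (∫ w in (0:ℝ)..(a-δ), (f w:ℂ)/((w:ℂ)-↑a))
          = (∫ w in (0:ℝ)..(a-δ), G ↑a w)
            + (f a:ℂ) * ↑(Real.log (a - δ - a) - Real.log (0 - a)) := by
        rw [intervalIntegral.integral_congr (g := fun w => G ↑a w + (f a:ℂ)*((w:ℂ)-↑a)⁻¹)
          (fun w _ => hsplit ↑a w)]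
        rw [intervalIntegral.integral_add
          (hGa_sub 0 (a-δ) ⟨le_refl 0, hR0.le⟩ ⟨by linarith, by linarith⟩) (iInv _ _ hni1)]
        rw [intervalIntegral.integral_const_mul, sp_ftc_rlog hni1]
      have s2 : (∫ w in (a+δ)..R, (f w:ℂ)/((w:ℂ)-↑a))
          = (∫ w in (a+δ)..R, G ↑a w)
            + (f a:ℂ) * ↑(Real.log (R - a) - Real.log (a + δ - a)) := by
        rw [intervalIntegral.integral_congr (g := fun w => G ↑a w + (f a:ℂ)*((w:ℂ)-↑a)⁻¹)
          (fun w _ => hsplit ↑a w)]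
        rw [intervalIntegral.integral_add
          (hGa_sub (a+δ) R ⟨by linarith, by linarith⟩ ⟨hR0.le, le_refl R⟩) (iInv _ _ hni2)]
        rw [intervalIntegral.integral_const_mul, sp_ftc_rlog hni2]
      rw [s1, s2, hc1def]
      have l1 : Real.log (a - δ - a) = Real.log δ := by
        rw [show a - δ - a = -δ by ring, Real.log_neg_eq_log]
      have l2 : Real.log (0 - a) = Real.log a := by
        rw [zero_sub, Real.log_neg_eq_log]
      have l3 : a + δ - a = δ := by ring
      rw [l1, l2, l3]
      push_cast
      ring
    have hmid : Tendsto (fun δ : ℝ => ∫ w in (a-δ)..(a+δ), G ↑a w)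
        (nhdsWithin 0 (Ioi 0)) (nhds 0) := by
      have hgl : Tendsto (fun δ : ℝ => (C:ℝ) * (2*δ)) (nhdsWithin 0 (Ioi 0)) (nhds 0) := by
        have h' : Tendsto (fun δ : ℝ => (C:ℝ) * (2*δ)) (nhds 0) (nhds ((C:ℝ) * (2*0))) :=
          (continuous_const.mul (continuous_const.mul continuous_id)).tendsto 0
        rw [mul_zero, mul_zero] at h'
        exact h'.mono_left nhdsWithin_le_nhds
      apply squeeze_zero_norm' ?_ hgl
      filter_upwards [Ioo_mem_nhdsGT_of_mem ⟨le_refl (0:ℝ), hm0⟩] with δ hδ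
      calc ‖∫ w in (a-δ)..(a+δ), G ↑a w‖ ≤ (C:ℝ) * |(a+δ) - (a-δ)| :=
            intervalIntegral.norm_integral_le_of_norm_le_const (fun w _ => hGa_norm w)
        _ = (C:ℝ) * (2*δ) := by
            rw [show (a+δ) - (a-δ) = 2*δ by ring, _root_.abs_of_nonneg (by linarith [hδ.1.le])]
    have heq : ∀ᶠ δ in nhdsWithin (0:ℝ) (Ioi 0),
        L - (∫ w in (a-δ)..(a+δ), G ↑a w)
          = (∫ w in (0:ℝ)..(a-δ), G ↑a w) + ∫ w in (a+δ)..R, G ↑a w := by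
      filter_upwards [Ioo_mem_nhdsGT_of_mem ⟨le_refl (0:ℝ), hm0⟩] with δ hδ
      obtain ⟨hδ0, hδm⟩ := hδ
      have hδa : δ < a := lt_of_lt_of_le hδm (min_le_left _ _)
      have hδR : a + δ < R := by
        have := lt_of_lt_of_le hδm (min_le_right _ _); linarith
      have i1 := hGa_sub 0 (a-δ) ⟨le_refl 0, hR0.le⟩ ⟨by linarith, by linarith⟩
      have i2 := hGa_sub (a-δ) (a+δ) ⟨by linarith, by linarith⟩ ⟨by linarith, by linarith⟩
      have i3 := hGa_sub (a+δ) R ⟨by linarith, by linarith⟩ ⟨hR0.le, le_refl R⟩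
      have e1 := intervalIntegral.integral_add_adjacent_intervals i1 i2
      have e2 := intervalIntegral.integral_add_adjacent_intervals (i1.trans i2) i3
      rw [hLdef]
      linear_combination -e1 - e2
    have hsum : Tendsto (fun δ : ℝ => (∫ w in (0:ℝ)..(a-δ), G ↑a w)
        + ∫ w in (a+δ)..R, G ↑a w) (nhdsWithin 0 (Ioi 0)) (nhds L) := by
      have h0 : Tendsto (fun δ : ℝ => L - ∫ w in (a-δ)..(a+δ), G ↑a w)
          (nhdsWithin 0 (Ioi 0)) (nhds (L - 0)) := tendsto_const_nhds.sub hmid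
      rw [sub_zero] at h0
      exact h0.congr' heq
    exact tendsto_nhds_unique hpv ((hsum.add tendsto_const_nhds).congr' (hev.mono (fun δ h => h.symm)))
  have key : ∀ s : ℝ, (s = 1 ∨ s = -1) →
      Tendsto (fun ε : ℝ => ∫ w in Ioi (0:ℝ),
          (f w : ℂ) / ((w:ℂ) - ↑a * Complex.exp (↑s * (Complex.I * ↑ε))))
        (nhdsWithin 0 (Set.Ioi 0))
        (nhds (pv + ↑s * (↑Real.pi * Complex.I * (f a : ℂ)))) := by
    intro s hs
    set z : ℝ → ℂ := fun ε => ↑a * Complex.exp (↑s * (Complex.I * ↑ε)) with hzdef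
    have hzθ : ∀ ε : ℝ, z ε = ↑a * Complex.exp (↑(s*ε) * Complex.I) := by
      intro ε
      rw [hzdef]
      push_cast
      ring_nf
    have hexp : Complex.exp (↑(s*Real.pi) * Complex.I) = -1 := by
      rcases hs with h | h <;> subst h
      · push_cast
        rw [one_mul]
        exact Complex.exp_pi_mul_I
      · push_cast
        rw [neg_one_mul, neg_mul, Complex.exp_neg, Complex.exp_pi_mul_I]
        norm_num
    have hev : ∀ᶠ ε in nhdsWithin (0:ℝ) (Ioi 0),
        (∫ w in Ioi (0:ℝ), (f w : ℂ) / ((w:ℂ) - z ε))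
          = (∫ w in Ioc (0:ℝ) R, G (z ε) w)
            + (f a : ℂ) * (Complex.log (↑R - z ε)
              - (↑(Real.log a) + ↑(s*(ε - Real.pi)) * Complex.I)) := by
      filter_upwards [Ioo_mem_nhdsGT_of_mem ⟨le_refl (0:ℝ), one_pos⟩] with ε hε
      obtain ⟨hε0, hε1⟩ := hε
      have hsin : Real.sin (s*ε) ≠ 0 := by
        have hsp : Real.sin ε > 0 :=
          Real.sin_pos_of_pos_of_lt_pi hε0 (by linarith [Real.pi_gt_three])
        rcases hs with h | h <;> subst h
        · rw [one_mul]; exact ne_of_gt hsp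
        · rw [neg_one_mul, Real.sin_neg]
          exact neg_ne_zero.2 (ne_of_gt hsp)
      have him : (z ε).im = a * Real.sin (s*ε) := by
        rw [hzθ, Complex.im_ofReal_mul, Complex.exp_ofReal_mul_I_im]
      have hzim : (z ε).im ≠ 0 := by
        rw [him]; exact mul_ne_zero ha.ne' hsin
      have hne : ∀ w : ℝ, (w:ℂ) - z ε ≠ 0 := by
        intro w h
        have : ((w:ℂ) - z ε).im = 0 := by simp [h]
        rw [Complex.sub_im, Complex.ofReal_im, zero_sub, neg_eq_zero] at this
        exact hzim this
      have hcont : Continuous (fun w : ℝ => ((w:ℂ) - z ε)) := by fun_prop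
      have iG : IntervalIntegrable (G (z ε)) volume 0 R := by
        apply Continuous.intervalIntegrable
        exact ((Complex.continuous_ofReal.comp hf.continuous).sub continuous_const).div
          hcont hne
      have iInv2 : IntervalIntegrable (fun w : ℝ => (f a:ℂ)*((w:ℂ) - z ε)⁻¹) volume 0 R := by
        apply Continuous.intervalIntegrable
        exact continuous_const.mul (hcont.inv₀ hne)
      rw [hIoi (z ε), ← intervalIntegral.integral_of_le hR0.le,
        intervalIntegral.integral_congr (g := fun w => G (z ε) w + (f a:ℂ)*((w:ℂ) - z ε)⁻¹)
          (fun w _ => hsplit (z ε) w),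
        intervalIntegral.integral_add iG iInv2, intervalIntegral.integral_const_mul,
        intervalIntegral.integral_of_le hR0.le]
      congr 1
      rw [sp_ftc_clog hzim hR0.le]
      congr 2
      have e3 : (↑(s*(ε-Real.pi)) * Complex.I : ℂ)
          = ↑(s*ε)*Complex.I - ↑(s*Real.pi)*Complex.I := by
        push_cast; ring
      have e4 : Complex.exp (↑(Real.log a) : ℂ) = ↑a := by
        rw [← Complex.ofReal_exp, Real.exp_log ha]
      have hexp2 : -(z ε) = Complex.exp (↑(Real.log a) + ↑(s*(ε - Real.pi)) * Complex.I) := by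
        rw [Complex.exp_add, e3, Complex.exp_sub, hexp, e4, hzθ]
        ring
      rw [hexp2, Complex.log_exp]
      · have him' : (↑(Real.log a) + ↑(s*(ε - Real.pi)) * Complex.I : ℂ).im
            = s*(ε - Real.pi) := by simp
        rw [him']
        rcases hs with h | h <;> subst h <;> [skip; skip] <;>
          nlinarith [Real.pi_gt_three]
      · have him' : (↑(Real.log a) + ↑(s*(ε - Real.pi)) * Complex.I : ℂ).im
            = s*(ε - Real.pi) := by simp
        rw [him']
        rcases hs with h | h <;> subst h <;> nlinarith [Real.pi_gt_three]
    have hT1 : Tendsto (fun ε : ℝ => ∫ w in Ioc (0:ℝ) R, G (z ε) w)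
        (nhdsWithin 0 (Ioi 0)) (nhds (∫ w in Ioc (0:ℝ) R, G ↑a w)) := by
      apply tendsto_integral_filter_of_dominated_convergence (fun _ => (C:ℝ))
      · exact Eventually.of_forall (fun ε => ((hGmeas (z ε)).aestronglyMeasurable).restrict)
      · apply Eventually.of_forall
        intro ε
        rw [ae_restrict_iff' measurableSet_Ioc]
        apply ae_of_all
        intro w hw
        rw [hzθ]
        exact hGz_norm (s*ε) w hw.1.le
      · exact integrableOn_const measure_Ioc_lt_top.ne
      · apply ae_of_all
        intro w
        by_cases hw : w = a
        · subst hw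
          simp only [hGdef, sub_self, zero_div]
          exact tendsto_const_nhds
        · have hden2 : Tendsto (fun ε : ℝ => (w:ℂ) - z ε)
              (nhdsWithin 0 (Ioi 0)) (nhds ((w:ℂ) - ↑a)) := by
            have hc : Continuous (fun ε : ℝ =>
                (w:ℂ) - ↑a * Complex.exp (↑s * (Complex.I * ↑ε))) := by fun_prop
            have h0 := hc.tendsto 0
            simp only [Complex.ofReal_zero, mul_zero, Complex.exp_zero, mul_one] at h0
            exact h0.mono_left nhdsWithin_le_nhds
          simp only [hGdef]
          exact Tendsto.div tendsto_const_nhds hden2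
            (sub_ne_zero.2 (fun h => hw (by exact_mod_cast h)))
    have hT2 : Tendsto (fun ε : ℝ => (f a : ℂ) * (Complex.log (↑R - z ε)
          - (↑(Real.log a) + ↑(s*(ε - Real.pi)) * Complex.I)))
        (nhdsWithin 0 (Ioi 0))
        (nhds ((f a:ℂ) * (↑(Real.log (R - a)) - ↑(Real.log a) + ↑(s*Real.pi) * Complex.I))) := by
      have hlog : Tendsto (fun ε : ℝ => Complex.log (↑R - z ε))
          (nhdsWithin 0 (Ioi 0)) (nhds (↑(Real.log (R-a)) : ℂ)) := by
        have h1 : Tendsto (fun ε : ℝ => (↑R - z ε : ℂ)) (nhds 0) (nhds (↑R - ↑a)) := by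
          have hc : Continuous (fun ε : ℝ =>
              (↑R:ℂ) - ↑a * Complex.exp (↑s * (Complex.I * ↑ε))) := by fun_prop
          simpa using hc.tendsto 0
        have h2 : ContinuousAt Complex.log (↑R - ↑a) := by
          apply continuousAt_clog
          left
          rw [Complex.sub_re, Complex.ofReal_re, Complex.ofReal_re]
          linarith
        have h3 := h2.tendsto.comp (h1.mono_left (nhdsWithin_le_nhds (s := Ioi (0:ℝ))))
        have h4 : Complex.log ((↑R : ℂ) - ↑a) = ↑(Real.log (R-a)) := by
          rw [← Complex.ofReal_sub, Complex.ofReal_log (by linarith : (0:ℝ) ≤ R - a)]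
        rwa [h4] at h3
      have hlin : Tendsto (fun ε : ℝ =>
            (↑(Real.log a) + ↑(s*(ε - Real.pi)) * Complex.I : ℂ))
          (nhdsWithin 0 (Ioi 0))
          (nhds (↑(Real.log a) + ↑(s*((0:ℝ) - Real.pi)) * Complex.I)) := by
        have hc : Continuous (fun ε : ℝ =>
            (↑(Real.log a) + ↑(s*(ε - Real.pi)) * Complex.I : ℂ)) := by fun_prop
        exact (hc.tendsto 0).mono_left nhdsWithin_le_nhds
      have h5 := Tendsto.const_mul ((f a : ℂ)) (hlog.sub hlin)
      have h6 : (↑(Real.log (R-a)) : ℂ) - (↑(Real.log a) + ↑(s*((0:ℝ) - Real.pi)) * Complex.I)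
          = ↑(Real.log (R - a)) - ↑(Real.log a) + ↑(s*Real.pi) * Complex.I := by
        push_cast
        ring
      rwa [h6] at h5
    have hval : (∫ w in Ioc (0:ℝ) R, G ↑a w)
        + (f a:ℂ) * (↑(Real.log (R-a)) - ↑(Real.log a) + ↑(s*Real.pi) * Complex.I)
        = pv + ↑s * (↑Real.pi * Complex.I * ↑(f a)) := by
      rw [hpvL, hLdef, hc1def, intervalIntegral.integral_of_le hR0.le]
      push_cast
      ring
    rw [← hval]
    exact (hT1.add hT2).congr' (hev.mono fun ε h => h.symm)
  constructor
  · have h := key 1 (Or.inl rfl)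
    simpa using h
  · have h := key (-1) (Or.inr rfl)
    rw [sub_eq_add_neg]
    convert h using 2 with ε
    · norm_num
    · push_cast
      ring_nf
end

section
/- For all A ∈ (0,1) and all real k ≥ 0, ∫_0^A log|log w| · w^k dw = ( -Ψ((k+1) log A) + A^{k+1} log|log A| ) / (k+1), where Ψ(z) = -P.V. ∫_{-z}^∞ e^{-t}/t dt. -/
open MeasureTheory Set

/-- The exponential-integral type function `Ψ(z) = -∫_{-z}^∞ e^{-t}/t dt`
(no principal value is needed when `-z > 0`). -/
noncomputable def PsiEI (z : ℝ) : ℝ := -∫ t in Set.Ioi (-z), Real.exp (-t) / t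

/-!
Since `Ψ'(z) = e^z / z` for `z < 0`, the function
`F(w) = (w^{k+1} log(-log w) - Ψ((k+1) log w)) / (k+1)` is a primitive of `log(-log w) w^k`
on `(0, 1)`. Both terms of `F` vanish as `w → 0⁺` (the first because `w^{k+1} log w → 0`,
the second because `Ψ` vanishes at `-∞`), so the integral over `(0, A)` is `F(A)`.
-/

open Filter Real Topology

theorem hasDerivAt_integral_Ioi {E : Type*} [NormedAddCommGroup E] [NormedSpace ℝ E]
    [CompleteSpace E] {f : ℝ → E} {c x : ℝ} (hf : IntegrableOn f (Ioi c)) (hcx : c < x)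
    (hfx : ContinuousAt f x) :
    HasDerivAt (fun y => ∫ t in Ioi y, f t) (-f x) x := by
  have hmem : Ioi c ∈ 𝓝 x := Ioi_mem_nhds hcx
  have hFTC : HasDerivAt (fun y => ∫ t in c..y, f t) (f x) x :=
    intervalIntegral.integral_hasDerivAt_right
      ((intervalIntegrable_iff_integrableOn_Ioc_of_le hcx.le).2
        (hf.mono_set Ioc_subset_Ioi_self))
      (AEStronglyMeasurable.stronglyMeasurableAtFilter_of_mem hf.aestronglyMeasurable hmem) hfx
  refine (hFTC.const_sub (∫ t in Ioi c, f t)).congr_of_eventuallyEq ?_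
  filter_upwards [hmem] with y hy
  rw [← intervalIntegral.integral_Ioi_sub_Ioi hf (le_of_lt hy), sub_sub_cancel]

theorem integrableOn_exp_neg_div_Ioi {c : ℝ} (hc : 0 < c) :
    IntegrableOn (fun t => exp (-t) / t) (Ioi c) := by
  have hdom : Integrable (fun t => c⁻¹ * exp (-t)) (volume.restrict (Ioi c)) := by
    simpa only [neg_mul, one_mul] using (exp_neg_integrableOn_Ioi c one_pos).const_mul c⁻¹
  refine hdom.mono' (by fun_prop : Measurable fun t => exp (-t) / t).aestronglyMeasurable ?_
  filter_upwards [ae_restrict_mem measurableSet_Ioi] with t ht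
  rw [norm_of_nonneg (by have := hc.trans ht; positivity), inv_mul_eq_div]
  gcongr
  exact le_of_lt ht

theorem hasDerivAt_PsiEI {z : ℝ} (hz : z < 0) : HasDerivAt PsiEI (exp z / z) z := by
  have hH := hasDerivAt_integral_Ioi (x := -z)
    (integrableOn_exp_neg_div_Ioi (c := -z / 2) (by linarith)) (by linarith)
    (by fun_prop (disch := linarith))
  refine (hH.comp z (hasDerivAt_neg z)).neg.congr_deriv ?_
  rw [neg_neg, div_neg]
  ring

theorem tendsto_PsiEI_atBot : Tendsto PsiEI atBot (𝓝 0) := by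
  have h := (tendsto_integral_Ioi_zero (f := fun t => exp (-t) / t) (μ := volume)
    tendsto_neg_atBot_atTop).neg
  rwa [neg_zero] at h

noncomputable def loglogPowPrimitive (k w : ℝ) : ℝ :=
  (w ^ (k + 1) * log (-log w) - PsiEI ((k + 1) * log w)) / (k + 1)

theorem hasDerivAt_loglogPowPrimitive {k w : ℝ} (hk : -1 < k) (hw0 : 0 < w) (hw1 : w < 1) :
    HasDerivAt (loglogPowPrimitive k) (log (-log w) * w ^ k) w := by
  have hκ : 0 < k + 1 := by linarith
  have hlw : log w < 0 := log_neg hw0 hw1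
  have hpow : HasDerivAt (fun w : ℝ => w ^ (k + 1)) ((k + 1) * w ^ k) w := by
    simpa using hasDerivAt_rpow_const (x := w) (p := k + 1) (Or.inl hw0.ne')
  have hloglog : HasDerivAt (fun w : ℝ => log (-log w)) ((-log w)⁻¹ * -w⁻¹) w :=
    (hasDerivAt_log (by linarith)).comp w (hasDerivAt_log hw0.ne').neg
  have hPsi := (hasDerivAt_PsiEI (mul_neg_of_pos_of_neg hκ hlw)).comp w
      ((hasDerivAt_log hw0.ne').const_mul (k + 1))
  refine (((hpow.mul hloglog).sub hPsi).div_const (k + 1)).congr_deriv ?_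
  have hexp : exp ((k + 1) * log w) = w ^ k * w := by
    rw [mul_comm, ← rpow_def_of_pos hw0, rpow_add_one hw0.ne']
  rw [hexp, rpow_add_one hw0.ne']
  field_simp
  ring

theorem tendsto_loglogPowPrimitive_nhdsGT_zero {k : ℝ} (hk : -1 < k) :
    Tendsto (loglogPowPrimitive k) (𝓝[>] 0) (𝓝 0) := by
  have hκ : 0 < k + 1 := by linarith
  have hfirst : Tendsto (fun w => w ^ (k + 1) * log (-log w)) (𝓝[>] 0) (𝓝 0) := by
    have hbound : Tendsto (fun w => -(log w * w ^ (k + 1))) (𝓝[>] 0) (𝓝 0) := by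
      simpa using (tendsto_log_mul_rpow_nhdsGT_zero hκ).neg
    refine tendsto_of_tendsto_of_tendsto_of_le_of_le' tendsto_const_nhds hbound ?_ ?_ <;>
      filter_upwards [Ioo_mem_nhdsGT (exp_pos (-1))] with w ⟨hw0, hw⟩
    · have : 1 < -log w := by linarith [(log_lt_iff_lt_exp hw0).2 hw]
      exact mul_nonneg (by positivity) (log_nonneg this.le)
    · have : 0 ≤ -log w := by linarith [(log_lt_iff_lt_exp hw0).2 hw]
      have := mul_le_mul_of_nonneg_left (log_le_self this) (rpow_nonneg hw0.le (k + 1))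
      linarith
  have hsecond : Tendsto (fun w => PsiEI ((k + 1) * log w)) (𝓝[>] 0) (𝓝 0) :=
    tendsto_PsiEI_atBot.comp ((tendsto_const_mul_atBot_of_pos hκ).2 tendsto_log_nhdsGT_zero)
  have h := (hfirst.sub hsecond).div_const (k + 1)
  rwa [sub_zero, zero_div] at h

theorem intervalIntegrable_loglog_mul_rpow {A k : ℝ} (hA0 : 0 < A) (hA1 : A < 1) (hk : 0 ≤ k) :
    IntervalIntegrable (fun w => log (-log w) * w ^ k) volume 0 A := by
  set C := |log (-log A)|
  have hdom : IntervalIntegrable (fun w => -log w + C) volume 0 A :=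
    intervalIntegral.intervalIntegrable_log'.neg.add intervalIntegrable_const
  refine hdom.mono_fun' (by fun_prop) ?_
  rw [uIoc_of_le hA0.le]
  filter_upwards [ae_restrict_mem measurableSet_Ioc] with w ⟨hw0, hwA⟩
  have hlogw : log w ≤ log A := log_le_log hw0 hwA
  have hlogA : 0 < -log A := neg_pos.2 (log_neg hA0 hA1)
  have hlower : log (-log A) ≤ log (-log w) := log_le_log hlogA (by linarith)
  have hupper : log (-log w) ≤ -log w := log_le_self (by linarith)
  have hpow : |w ^ k| ≤ 1 := by
    rw [abs_of_nonneg (by positivity)]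
    exact rpow_le_one hw0.le (by linarith) hk
  calc ‖log (-log w) * w ^ k‖ = |log (-log w)| * |w ^ k| := by rw [norm_eq_abs, abs_mul]
    _ ≤ |log (-log w)| := mul_le_of_le_one_right (abs_nonneg _) hpow
    _ ≤ -log w + C := by
      rw [abs_le]
      constructor <;> linarith [neg_abs_le (log (-log A)), abs_nonneg (log (-log A))]

theorem integral_loglog_mul_rpow {A k : ℝ} (hA0 : 0 < A) (hA1 : A < 1) (hk : 0 ≤ k) :
    ∫ w in (0)..A, log (-log w) * w ^ k = loglogPowPrimitive k A := by
  have hk' : -1 < k := by linarith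
  set F := Function.update (loglogPowPrimitive k) 0 0
  have hF : ∀ w, 0 < w → F =ᶠ[𝓝 w] loglogPowPrimitive k := fun w hw0 => by
    filter_upwards [eventually_ne_nhds hw0.ne'] with y hy using Function.update_of_ne hy _ _
  have hderiv : ∀ w ∈ Ioo 0 A, HasDerivAt F (log (-log w) * w ^ k) w := fun w ⟨hw0, hwA⟩ =>
    (hasDerivAt_loglogPowPrimitive hk' hw0 (hwA.trans hA1)).congr_of_eventuallyEq (hF w hw0)
  have hcont : ContinuousOn F (Icc 0 A) := by
    intro w ⟨hw0, hwA⟩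
    rcases hw0.eq_or_lt with rfl | hw0
    · exact continuousWithinAt_update_same.2
        ((tendsto_loglogPowPrimitive_nhdsGT_zero hk').mono_left
          (nhdsWithin_mono _ fun x ⟨hx, hx0⟩ => lt_of_le_of_ne hx.1 (Ne.symm hx0)))
    · exact ((hasDerivAt_loglogPowPrimitive hk' hw0 (hwA.trans_lt hA1)).continuousAt.congr
        (hF w hw0).symm).continuousWithinAt
  rw [intervalIntegral.integral_eq_sub_of_hasDerivAt_of_le hA0.le hcont hderiv
    (intervalIntegrable_loglog_mul_rpow hA0 hA1 hk)]
  simp [F, hA0.ne']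

/-- For `A ∈ (0,1)` and real `k ≥ 0`,
`∫_0^A log|log w| w^k dw = (-Ψ((k+1)log A) + A^{k+1} log|log A|)/(k+1)`. -/
theorem integral_loglog_pow_left (A k : ℝ) (hA : A ∈ Set.Ioo (0:ℝ) 1) (hk : 0 ≤ k) :
    ∫ w in Set.Ioo (0:ℝ) A, Real.log |Real.log w| * w ^ k
      = (-PsiEI ((k + 1) * Real.log A) + A ^ (k + 1) * Real.log |Real.log A|)
          / (k + 1) := by
  obtain ⟨hA0, hA1⟩ := hA
  have hlog_abs : ∀ w ∈ Ioo 0 A, log |log w| * w ^ k = log (-log w) * w ^ k :=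
    fun w ⟨hw0, hwA⟩ => by rw [abs_of_neg (log_neg hw0 (hwA.trans hA1))]
  rw [setIntegral_congr_fun measurableSet_Ioo hlog_abs, ← integral_Ioc_eq_integral_Ioo,
    ← intervalIntegral.integral_of_le hA0.le, integral_loglog_mul_rpow hA0 hA1 hk,
    loglogPowPrimitive, abs_of_neg (log_neg hA0 hA1)]
  ring
end
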